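/- Descent-of-surrogate implies descent of IPM: under the assumptions of the surrogate bound, define L_θ(θ') = g(p_{θ'}, f_{α*(θ)}, q) + 2l‖θ'−θ‖. Then L_θ(θ) = Φ(p_θ, q), and for any θ' we have Φ(p_{θ'}, q) − Φ(p_θ, q) ≤ L_θ(θ') − L_θ(θ); in particular if L_θ(θ') < L_θ(θ) then Φ(p_{θ'}, q) < Φ(p_θ, q). -/

import Mathlib

/-! Since `α*(θ)` maximizes `g(p_θ, ·, q)`, moving from `θ` to `θ'` changes `Φ` by at most
the Lipschitz constant twice: `Φ(θ') = g(θ', α*(θ')) ≤ g(θ, α*(θ')) + l d ≤ g(θ, α*(θ)) + l d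
≤ g(θ', α*(θ)) + 2 l d`. So `L_θ` majorizes `Φ` and touches it at `θ`, which gives descent. -/

theorem le_apply_argmax_add_two_mul_dist {X A : Type*} [PseudoMetricSpace X]
    {g : X → A → ℝ} {l : ℝ} (hLip : ∀ α x y, |g x α - g y α| ≤ l * dist x y)
    {αstar : X → A} (hmax : ∀ x α, g x α ≤ g x (αstar x)) (x y : X) :
    g y (αstar y) ≤ g y (αstar x) + 2 * l * dist y x := by
  have hy : g y (αstar y) - g x (αstar y) ≤ l * dist y x := (abs_le.mp (hLip _ y x)).2
  have hx : g x (αstar x) - g y (αstar x) ≤ l * dist y x := by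
    rw [dist_comm]; exact (abs_le.mp (hLip _ x y)).2
  linarith [hmax x (αstar y)]

theorem stmt6_general {m : ℕ} {A : Type*}
    (g : EuclideanSpace ℝ (Fin m) → A → ℝ)  -- g θ α = g(p_θ, f_α, q)
    (l : ℝ)
    (hLip : ∀ (α : A) (θ θ' : EuclideanSpace ℝ (Fin m)), |g θ α - g θ' α| ≤ l * ‖θ - θ'‖)
    (αstar : EuclideanSpace ℝ (Fin m) → A)
    (hmax : ∀ θ α, g θ α ≤ g θ (αstar θ))
    (Φ : EuclideanSpace ℝ (Fin m) → ℝ)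
    (hΦ : ∀ θ, Φ θ = g θ (αstar θ))
    (L : EuclideanSpace ℝ (Fin m) → EuclideanSpace ℝ (Fin m) → ℝ)
    (hL : ∀ θ θ', L θ θ' = g θ' (αstar θ) + 2 * l * ‖θ' - θ‖) :
    (∀ θ, L θ θ = Φ θ)
    ∧ (∀ θ θ', Φ θ' - Φ θ ≤ L θ θ' - L θ θ)
    ∧ (∀ θ θ', L θ θ' < L θ θ → Φ θ' < Φ θ) := by
  have hLL : ∀ θ, L θ θ = Φ θ := fun θ => by simp [hL, hΦ]
  have hmaj : ∀ θ θ', Φ θ' ≤ L θ θ' := fun θ θ' => by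
    rw [hΦ, hL, ← dist_eq_norm]
    exact le_apply_argmax_add_two_mul_dist (fun α x y => dist_eq_norm x y ▸ hLip α x y) hmax θ θ'
  refine ⟨hLL, fun θ θ' => ?_, fun θ θ' h => ?_⟩ <;> linarith [hmaj θ θ', hLL θ]

/-- Descent of the surrogate implies descent of the IPM. With
`L_θ(θ') = g(p_{θ'}, f_{α*(θ)}, q) + 2l‖θ'−θ‖`, one has `L_θ(θ) = Φ(p_θ, q)`,
`Φ(p_{θ'}, q) − Φ(p_θ, q) ≤ L_θ(θ') − L_θ(θ)`, and if `L_θ(θ') < L_θ(θ)` then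
`Φ(p_{θ'}, q) < Φ(p_θ, q)`. -/
theorem stmt6 {m : ℕ} {A : Type*}
    (g : EuclideanSpace ℝ (Fin m) → A → ℝ)  -- g θ α = g(p_θ, f_α, q)
    (l : ℝ) (hl : 0 ≤ l)
    (hLip : ∀ (α : A) (θ θ' : EuclideanSpace ℝ (Fin m)), |g θ α - g θ' α| ≤ l * ‖θ - θ'‖)
    (αstar : EuclideanSpace ℝ (Fin m) → A)
    (hmax : ∀ θ α, g θ α ≤ g θ (αstar θ))
    (Φ : EuclideanSpace ℝ (Fin m) → ℝ)
    (hΦ : ∀ θ, Φ θ = g θ (αstar θ))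
    (L : EuclideanSpace ℝ (Fin m) → EuclideanSpace ℝ (Fin m) → ℝ)
    (hL : ∀ θ θ', L θ θ' = g θ' (αstar θ) + 2 * l * ‖θ' - θ‖) :
    (∀ θ, L θ θ = Φ θ)
    ∧ (∀ θ θ', Φ θ' - Φ θ ≤ L θ θ' - L θ θ)
    ∧ (∀ θ θ', L θ θ' < L θ θ → Φ θ' < Φ θ) :=
  stmt6_general g l hLip αstar hmax Φ hΦ L hL
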